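/- arXiv:2008.03936 — 5 statements merged into one kernel-verified Lean document; each statement's English description precedes it below -/
import Mathlib

section
/- For every real multivariate polynomial p in n variables, there exist a dimension d, an affine map A from ℝ^n to the d×d real matrices whose value A(x) is strictly upper triangular (hence nilpotent) for every input x, a linear functional ℓ on the space of d×d real matrices, and a constant c ∈ ℝ, such that for all x ∈ ℝ^n, ℓ(exp(A(x))) + c = p(x), where exp denotes the matrix exponential. -/
/-!
A monomial `a * x i₁ * ⋯ * x iₖ` is `a * k!` times the corner entry `(0, k)` of `exp (S x)`, where
`S x` is the shift matrix carrying the linear forms `x i₁, …, x iₖ` on its superdiagonal: `S x` is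
nilpotent, so `exp (S x)` is the finite sum of the `(S x) ^ m / m!`, and only `m = k` reaches the
corner, along the superdiagonal. Sums of such functions are realised by block-diagonal matrices:
the block embedding is an injective algebra homomorphism, so it commutes with the exponential of
nilpotent elements and has a linear left inverse, through which the two functionals are combined.
-/

open Matrix Finset
open scoped Nat

section NilpotentExp

variable {𝔸 𝔹 : Type*} [Ring 𝔸] [Algebra ℚ 𝔸] [TopologicalSpace 𝔸] [IsTopologicalRing 𝔸]
  [Ring 𝔹] [Algebra ℚ 𝔹] [TopologicalSpace 𝔹] [IsTopologicalRing 𝔹]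

theorem NormedSpace.exp_eq_isNilpotent_exp {a : 𝔸} (ha : IsNilpotent a) :
    NormedSpace.exp a = IsNilpotent.exp a := by
  obtain ⟨k, hk⟩ := ha
  rw [exp_eq_tsum_rat, IsNilpotent.exp_eq_sum hk]
  exact tsum_eq_sum fun i hi => by
    rw [pow_eq_zero_of_le (not_lt.1 (mem_range.not.1 hi)) hk, smul_zero]

theorem NormedSpace.map_exp_of_isNilpotent {F : Type*} [FunLike F 𝔸 𝔹] [RingHomClass F 𝔸 𝔹]
    (f : F) {a : 𝔸} (ha : IsNilpotent a) : f (NormedSpace.exp a) = NormedSpace.exp (f a) := by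
  rw [exp_eq_isNilpotent_exp ha, exp_eq_isNilpotent_exp (ha.map f), IsNilpotent.map_exp ha]

end NilpotentExp

namespace Matrix

def IsStrictUpperTriangular {n R : Type*} [LinearOrder n] [Zero R] (M : Matrix n n R) : Prop :=
  ∀ i j, j ≤ i → M i j = 0

section Semiring

variable {R : Type*} [Semiring R] {d : ℕ} {M : Matrix (Fin d) (Fin d) R}

theorem IsStrictUpperTriangular.pow_apply_eq_zero (hM : M.IsStrictUpperTriangular) (m : ℕ)
    {i j : Fin d} (hij : (j : ℕ) < i + m) : (M ^ m) i j = 0 := by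
  induction m generalizing i with
  | zero => exact one_apply_ne (by rintro rfl; omega)
  | succ m ih =>
    rw [pow_succ', mul_apply]
    refine sum_eq_zero fun l _ => ?_
    rcases le_or_gt l i with hl | hl
    · rw [hM i l hl, zero_mul]
    · rw [ih (by omega), mul_zero]

theorem IsStrictUpperTriangular.pow_eq_zero (hM : M.IsStrictUpperTriangular) : M ^ d = 0 := by
  ext i j
  exact hM.pow_apply_eq_zero d (by omega)

end Semiring

section Shift

variable {R : Type*} [CommSemiring R] (k : ℕ)

def shiftMatrix : (ℕ → R) →ₗ[R] Matrix (Fin (k + 1)) (Fin (k + 1)) R where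
  toFun v := of fun i j => if (i : ℕ) + 1 = j then v i else 0
  map_add' v w := by ext i j; simp only [of_apply, add_apply, Pi.add_apply]; split_ifs <;> simp
  map_smul' r v := by ext i j; simp only [of_apply, smul_apply, Pi.smul_apply]; split_ifs <;> simp

variable {k}

theorem shiftMatrix_apply (v : ℕ → R) (i j : Fin (k + 1)) :
    shiftMatrix k v i j = if (i : ℕ) + 1 = j then v i else 0 := rfl

theorem isStrictUpperTriangular_shiftMatrix (v : ℕ → R) :
    (shiftMatrix k v).IsStrictUpperTriangular := fun i j hji => by
  rw [shiftMatrix_apply, if_neg (by simp only [Fin.le_iff_val_le_val] at hji; omega)]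

theorem shiftMatrix_pow_apply (v : ℕ → R) (m : ℕ) (i j : Fin (k + 1)) :
    (shiftMatrix k v ^ m) i j = if (i : ℕ) + m = j then ∏ t ∈ range m, v (i + t) else 0 := by
  induction m generalizing i with
  | zero => simp [one_apply, Fin.ext_iff]
  | succ m ih =>
    rw [pow_succ', mul_apply]
    by_cases hi : (i : ℕ) < k
    · rw [sum_eq_single ⟨i + 1, by omega⟩ (fun l _ hl => by
        rw [shiftMatrix_apply, if_neg (fun h => hl (Fin.ext h.symm)), zero_mul]) (by simp)]
      simp only [shiftMatrix_apply, ih, if_true, prod_range_succ']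
      split_ifs <;> first | omega | simp [add_comm, add_left_comm, mul_comm]
    · rw [if_neg (by omega)]
      exact sum_eq_zero fun l _ => by rw [shiftMatrix_apply, if_neg (by omega), zero_mul]

theorem shiftMatrix_pow_apply_zero_last (v : ℕ → R) (m : ℕ) :
    (shiftMatrix k v ^ m) 0 (Fin.last k) = if m = k then ∏ t ∈ range k, v t else 0 := by
  rw [shiftMatrix_pow_apply]
  simp only [Fin.val_zero, Fin.val_last, zero_add]
  split_ifs with h <;> simp [h]

end Shift

theorem exp_shiftMatrix_apply_zero_last {k : ℕ} {𝕜 : Type*} [Field 𝕜] [CharZero 𝕜]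
    [TopologicalSpace 𝕜] [IsTopologicalRing 𝕜] (v : ℕ → 𝕜) :
    NormedSpace.exp (shiftMatrix k v) 0 (Fin.last k) = (k ! : 𝕜)⁻¹ * ∏ t ∈ range k, v t := by
  have hpow : shiftMatrix k v ^ (k + 1) = 0 := (isStrictUpperTriangular_shiftMatrix v).pow_eq_zero
  rw [NormedSpace.exp_eq_isNilpotent_exp ⟨_, hpow⟩, IsNilpotent.exp_eq_sum hpow, sum_apply]
  simp only [smul_apply, shiftMatrix_pow_apply_zero_last, smul_ite, smul_zero]
  rw [sum_ite_eq' _ k, if_pos (self_mem_range_succ k), Rat.smul_def]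
  push_cast
  rfl

section Blocks

variable {m n R : Type*} [Fintype m] [Fintype n] [DecidableEq m] [DecidableEq n] [CommSemiring R]

variable (m n R) in
def fromBlocksDiagonalAlgHom : Matrix m m R × Matrix n n R →ₐ[R] Matrix (m ⊕ n) (m ⊕ n) R where
  toFun P := fromBlocks P.1 0 0 P.2
  map_one' := fromBlocks_one
  map_mul' P Q := by simp [fromBlocks_multiply]
  map_zero' := fromBlocks_zero
  map_add' P Q := by simp [fromBlocks_add]
  commutes' r := by ext (i | i) (j | j) <;> simp [Algebra.algebraMap_eq_smul_one, one_apply]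

theorem fromBlocksDiagonalAlgHom_injective :
    Function.Injective (fromBlocksDiagonalAlgHom m n R) := fun P Q h => by
  obtain ⟨h₁, -, -, h₂⟩ := fromBlocks_inj.1 h
  exact Prod.ext h₁ h₂

end Blocks

theorem IsStrictUpperTriangular.reindex_fromBlocks {R : Type*} [Zero R] {d₁ d₂ : ℕ}
    {M : Matrix (Fin d₁) (Fin d₁) R} {N : Matrix (Fin d₂) (Fin d₂) R}
    (hM : M.IsStrictUpperTriangular) (hN : N.IsStrictUpperTriangular) :
    (reindex finSumFinEquiv finSumFinEquiv (fromBlocks M 0 0 N)).IsStrictUpperTriangular := by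
  intro i j hji
  obtain ⟨i, rfl⟩ := finSumFinEquiv.surjective i
  obtain ⟨j, rfl⟩ := finSumFinEquiv.surjective j
  rcases i with i | i <;> rcases j with j | j <;>
    simp only [reindex_apply, submatrix_apply, Equiv.symm_apply_apply, fromBlocks_apply₁₁,
      fromBlocks_apply₁₂, fromBlocks_apply₂₁, fromBlocks_apply₂₂, zero_apply] at hji ⊢
  · exact hM i j hji
  · exact hN i j ((Fin.natAdd_le_natAdd_iff _).1 hji)

end Matrix

section MLayer

variable {𝕜 E : Type*} [Field 𝕜] [TopologicalSpace 𝕜] [IsTopologicalRing 𝕜] [AddCommGroup E]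
  [Module 𝕜 E]

def IsMLayerFunction (f : E → 𝕜) : Prop :=
  ∃ (d : ℕ) (A : E →ᵃ[𝕜] Matrix (Fin d) (Fin d) 𝕜) (ℓ : Matrix (Fin d) (Fin d) 𝕜 →ₗ[𝕜] 𝕜) (c : 𝕜),
    (∀ x, (A x).IsStrictUpperTriangular) ∧ ∀ x, ℓ (NormedSpace.exp (A x)) + c = f x

variable [CharZero 𝕜]

theorem IsMLayerFunction.add {f g : E → 𝕜} (hf : IsMLayerFunction f) (hg : IsMLayerFunction g) :
    IsMLayerFunction (f + g) := by
  obtain ⟨d₁, A₁, ℓ₁, c₁, hA₁, hf⟩ := hf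
  obtain ⟨d₂, A₂, ℓ₂, c₂, hA₂, hg⟩ := hg
  let Φ := (reindexAlgEquiv 𝕜 𝕜 finSumFinEquiv).toAlgHom.comp
    (fromBlocksDiagonalAlgHom (Fin d₁) (Fin d₂) 𝕜)
  have hΦ : LinearMap.ker Φ.toLinearMap = ⊥ := LinearMap.ker_eq_bot.2 <|
    (reindexAlgEquiv 𝕜 𝕜 _).injective.comp fromBlocksDiagonalAlgHom_injective
  refine ⟨d₁ + d₂, Φ.toLinearMap.toAffineMap.comp (A₁.prod A₂),
    ℓ₁.coprod ℓ₂ ∘ₗ Φ.toLinearMap.leftInverse, c₁ + c₂,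
    fun x => (hA₁ x).reindex_fromBlocks (hA₂ x), fun x => ?_⟩
  have hnil : IsNilpotent (A₁ x, A₂ x) := ⟨d₁ + d₂, Prod.ext
    (pow_eq_zero_of_le (by omega) (hA₁ x).pow_eq_zero)
    (pow_eq_zero_of_le (by omega) (hA₂ x).pow_eq_zero)⟩
  have hexp : NormedSpace.exp (A₁ x, A₂ x) = (NormedSpace.exp (A₁ x), NormedSpace.exp (A₂ x)) :=
    Prod.ext (NormedSpace.map_exp_of_isNilpotent (RingHom.fst _ _) hnil)
      (NormedSpace.map_exp_of_isNilpotent (RingHom.snd _ _) hnil)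
  change ℓ₁.coprod ℓ₂ (Φ.toLinearMap.leftInverse (NormedSpace.exp (Φ (A₁ x, A₂ x)))) + _ = _
  rw [← NormedSpace.map_exp_of_isNilpotent Φ hnil, ← AlgHom.toLinearMap_apply,
    LinearMap.leftInverse_apply_of_inj hΦ, hexp, LinearMap.coprod_apply, Pi.add_apply, ← hf x,
    ← hg x]
  ring

theorem isMLayerFunction_mul_prod (a : 𝕜) (L : List (E →ₗ[𝕜] 𝕜)) :
    IsMLayerFunction fun x => a * (L.map (· x)).prod := by
  refine ⟨L.length + 1, (shiftMatrix L.length ∘ₗ LinearMap.pi fun t => L.getD t 0).toAffineMap,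
    (a * L.length !) • entryLinearMap 𝕜 𝕜 0 (Fin.last _), 0,
    fun x => isStrictUpperTriangular_shiftMatrix _, fun x => ?_⟩
  have hprod : ∏ t ∈ range L.length, (L.getD t 0) x = (L.map (· x)).prod := by
    rw [← Fin.prod_univ_eq_prod_range, ← Fin.prod_univ_fun_getElem]
    exact prod_congr rfl fun t _ => by rw [List.getD_eq_getElem]
  change a * L.length ! * NormedSpace.exp (shiftMatrix _ _) 0 (Fin.last _) + 0 = _
  rw [exp_shiftMatrix_apply_zero_last, add_zero, ← mul_assoc, mul_assoc a,
    mul_inv_cancel₀ (Nat.cast_ne_zero.2 (Nat.factorial_ne_zero _)), mul_one]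
  exact congrArg (a * ·) hprod

theorem isMLayerFunction_eval {σ : Type*} (p : MvPolynomial σ 𝕜) :
    IsMLayerFunction fun x : σ → 𝕜 => MvPolynomial.eval x p := by
  induction p using MvPolynomial.induction_on' with
  | monomial e a =>
    have hmonomial : (fun x : σ → 𝕜 => MvPolynomial.eval x (MvPolynomial.monomial e a)) =
        fun x => a * (((Finsupp.toMultiset e).toList.map
          fun i => (LinearMap.proj i : (σ → 𝕜) →ₗ[𝕜] 𝕜)).map (· x)).prod := by
      ext x
      classical
      rw [MvPolynomial.eval_monomial, List.map_map, Function.comp_def, Multiset.prod_map_toList,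
        prod_multiset_map_count, Finsupp.toFinset_toMultiset]
      simp [Finsupp.prod, Finsupp.count_toMultiset]
    rw [hmonomial]
    exact isMLayerFunction_mul_prod a _
  | add p q hp hq =>
    simp only [map_add]
    exact hp.add hq

end MLayer

/-- For every real multivariate polynomial `p` in `n` variables, there exist a dimension `d`,
an affine map `A : ℝ^n → Matrix (Fin d) (Fin d) ℝ` whose value is strictly upper triangular
for every input, a linear functional `ℓ` on `d × d` matrices, and a constant `c` such that
`ℓ (exp (A x)) + c = p x` for all `x`. -/
theorem mlayer_expresses_polynomials (n : ℕ) (p : MvPolynomial (Fin n) ℝ) :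
    ∃ (d : ℕ) (A : (Fin n → ℝ) →ᵃ[ℝ] Matrix (Fin d) (Fin d) ℝ)
      (ℓ : Matrix (Fin d) (Fin d) ℝ →ₗ[ℝ] ℝ) (c : ℝ),
      (∀ (x : Fin n → ℝ) (i j : Fin d), (j : ℕ) ≤ (i : ℕ) → A x i j = 0) ∧
      (∀ x : Fin n → ℝ, ℓ (NormedSpace.exp (A x)) + c = MvPolynomial.eval x p) := by
  exact isMLayerFunction_eval p
end

section
/- For every continuous function f : [a,b]^n → ℝ^m and every ε > 0, there exist a dimension d, an affine map A from ℝ^n to the d×d real matrices, a linear map L from d×d real matrices to ℝ^m, and a vector v ∈ ℝ^m, such that for all x ∈ [a,b]^n and all coordinates 0 ≤ j < m, |f(x)_j − (L(exp(A(x))) + v)_j| < ε. -/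
/-!
The functions `x ↦ exp (ℓ x)`, for continuous linear functionals `ℓ`, form a multiplicative
monoid, since `exp (ℓ₁ x) * exp (ℓ₂ x) = exp ((ℓ₁ + ℓ₂) x)`, and they separate points. Their
linear span is therefore a point-separating subalgebra of `C(K, ℝ)`, dense for compact `K` by
Stone–Weierstrass. A combination `∑ i, exp (ℓ i x) • c i` is `L (exp (A x))` for the diagonal
matrix `A x = diagonal (ℓ · x)`, whose exponential is taken entrywise, and the linear map `L`
pairing the diagonal with the coefficients `c i`.
-/

section ExpDual

variable {E : Type*} [AddCommGroup E] [Module ℝ E] [TopologicalSpace E]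

noncomputable def expDualRestrict (K : Set E) (ℓ : StrongDual ℝ E) : C(K, ℝ) :=
  ⟨fun x => Real.exp (ℓ x), by fun_prop⟩

def expDualSubmonoid (K : Set E) : Submonoid C(K, ℝ) where
  carrier := Set.range (expDualRestrict K)
  one_mem' := ⟨0, by ext; simp [expDualRestrict]⟩
  mul_mem' := by
    rintro _ _ ⟨ℓ₁, rfl⟩ ⟨ℓ₂, rfl⟩
    exact ⟨ℓ₁ + ℓ₂, by ext; simp [expDualRestrict, Real.exp_add]⟩

variable [SeparatingDual ℝ E]

theorem separatesPoints_adjoin_expDualSubmonoid (K : Set E) :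
    (Algebra.adjoin ℝ (expDualSubmonoid K : Set C(K, ℝ))).SeparatesPoints := by
  intro x y hxy
  obtain ⟨ℓ, hℓ⟩ := SeparatingDual.exists_separating_of_ne (R := ℝ) (Subtype.coe_ne_coe.mpr hxy)
  exact ⟨_, ⟨_, Algebra.subset_adjoin ⟨ℓ, rfl⟩, rfl⟩, by simpa [expDualRestrict] using hℓ⟩

theorem exists_finsupp_sum_exp_dual_near {K : Set E} (hK : IsCompact K) {F : E → ℝ}
    (hF : ContinuousOn F K) {ε : ℝ} (hε : 0 < ε) :
    ∃ c : StrongDual ℝ E →₀ ℝ, ∀ x ∈ K, |F x - c.sum fun ℓ r => r * Real.exp (ℓ x)| < ε := by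
  have : CompactSpace K := isCompact_iff_compactSpace.mp hK
  obtain ⟨⟨g, hg⟩, hgF⟩ := ContinuousMap.exists_mem_subalgebra_near_continuous_of_separatesPoints
    _ (separatesPoints_adjoin_expDualSubmonoid K) _ hF.domRestrict ε hε
  replace hg : g ∈ Submodule.span ℝ (Set.range (expDualRestrict K)) := by
    rwa [← Subalgebra.mem_toSubmodule, Algebra.adjoin_eq_span, Submonoid.closure_eq] at hg
  obtain ⟨c, rfl⟩ := Finsupp.mem_span_range_iff_exists_finsupp.mp hg
  refine ⟨c, fun x hx => ?_⟩
  rw [abs_sub_comm]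
  simpa [Finsupp.sum, expDualRestrict] using hgF ⟨x, hx⟩

/-- The coordinates share one family `ℓ`: the union of the supports of their approximants. -/
theorem exists_sum_exp_dual_smul_near {ι : Type*} [Fintype ι] {K : Set E} (hK : IsCompact K)
    {f : E → ι → ℝ} (hf : ContinuousOn f K) {ε : ℝ} (hε : 0 < ε) :
    ∃ (k : ℕ) (ℓ : Fin k → StrongDual ℝ E) (c : Fin k → ι → ℝ),
      ∀ x ∈ K, ∀ j, |f x j - (∑ i, Real.exp (ℓ i x) • c i) j| < ε := by
  classical
  choose c hc using fun j =>
    exists_finsupp_sum_exp_dual_near hK ((continuous_apply j).comp_continuousOn hf) hε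
  set s := Finset.univ.biUnion fun j => (c j).support
  let e := s.equivFin.symm
  refine ⟨s.card, fun i => e i, fun i j => c j (e i), fun x hx j => ?_⟩
  have hsum : (∑ i, Real.exp ((e i : StrongDual ℝ E) x) • fun j => c j (e i)) j =
      (c j).sum fun ℓ r => r * Real.exp (ℓ x) := by
    rw [Finsupp.sum_of_support_subset _ (Finset.subset_biUnion_of_mem (fun j => (c j).support)
      (Finset.mem_univ j)) (fun ℓ r => r * Real.exp (ℓ x)) (fun _ _ => zero_mul _),
      ← s.sum_coe_sort, ← e.sum_comp]
    simp only [Finset.sum_apply, Pi.smul_apply, smul_eq_mul, mul_comm]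
  rw [hsum]
  exact hc j x hx

end ExpDual

theorem Matrix.exp_diagonal_apply_self {ι : Type*} [Fintype ι] [DecidableEq ι] (v : ι → ℝ)
    (i : ι) : NormedSpace.exp (Matrix.diagonal v) i i = Real.exp (v i) := by
  rw [Matrix.exp_diagonal, Matrix.diagonal_apply_eq, Pi.exp_def, Real.exp_eq_exp_ℝ]

/-- Universal approximation: for every continuous `f : [a,b]^n → ℝ^m` and every `ε > 0`,
there exist a dimension `d`, an affine map `A` from `ℝ^n` to `d × d` matrices, a linear map
`L` from `d × d` matrices to `ℝ^m`, and a vector `v`, such that for all `x ∈ [a,b]^n` and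
all coordinates `j`, `|f(x)_j − (L (exp (A x)) + v)_j| < ε`. -/
theorem mlayer_universal_approximation (n m : ℕ) (a b : ℝ)
    (f : (Fin n → ℝ) → (Fin m → ℝ))
    (hf : ContinuousOn f (Set.pi Set.univ fun _ : Fin n => Set.Icc a b))
    (ε : ℝ) (hε : 0 < ε) :
    ∃ (d : ℕ) (A : (Fin n → ℝ) →ᵃ[ℝ] Matrix (Fin d) (Fin d) ℝ)
      (L : Matrix (Fin d) (Fin d) ℝ →ₗ[ℝ] (Fin m → ℝ)) (v : Fin m → ℝ),
      ∀ x ∈ Set.pi Set.univ fun _ : Fin n => Set.Icc a b, ∀ j : Fin m,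
        |f x j - (L (NormedSpace.exp (A x)) j + v j)| < ε := by
  obtain ⟨k, ℓ, c, hfc⟩ :=
    exists_sum_exp_dual_smul_near (isCompact_univ_pi fun _ => isCompact_Icc) hf hε
  let A := Matrix.diagonalLinearMap (Fin k) ℝ ℝ ∘ₗ (ContinuousLinearMap.pi ℓ).toLinearMap
  let L := Fintype.linearCombination ℝ c ∘ₗ Matrix.diagLinearMap (Fin k) ℝ ℝ
  refine ⟨k, A.toAffineMap, L, 0, fun x hx j => ?_⟩
  simpa [A, L, Matrix.exp_diagonal_apply_self, Fintype.linearCombination_apply]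
    using hfc x hx j
end

section
/- Let A be a linear map from ℝ^p (with the sup norm ‖·‖_∞) to the n×n real matrices (with the operator 2-norm), let δ ≥ 0 satisfy ‖A(x̃)‖₂ ≤ δ·‖x̃‖_∞ for all x̃ ∈ ℝ^p, let B be a fixed n×n real matrix, and let S be a linear map from the n×n real matrices (with the Frobenius norm) to Euclidean ℝ^h with operator norm ‖S‖. Then for all x, x̃ ∈ ℝ^p, ‖S(exp(B + A(x + x̃))) − S(exp(B + A(x)))‖₂ ≤ √n · ‖S‖ · δ · ‖x̃‖_∞ · exp(δ·‖x̃‖_∞) · exp(‖B + A(x)‖₂). -/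
/-!
Write `X = B + A x` and `E = A z`. In any Banach algebra, expanding
`(X + E)^k - X^k = (X + E)((X + E)^(k-1) - X^(k-1)) + E X^(k-1)` and summing the exponential
series gives `‖exp (X + E) - exp X‖ ≤ e^(‖X‖ + ‖E‖) - e^‖X‖ ≤ ‖E‖ e^‖E‖ e^‖X‖`. Transported to
operators on Euclidean space (`toEuclideanCLM` commutes with `exp`), this bounds the operator
2-norm of `exp (X + E) - exp X`; the Frobenius norm of an `n × n` matrix is at most `√n` times
its operator 2-norm, and `S` costs a factor `‖S‖`.
-/

attribute [local instance] Matrix.frobeniusNormedAddCommGroup Matrix.frobeniusNormedSpace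

/-- The operator 2-norm of a real `n × n` matrix: its norm as a linear operator on
Euclidean space `ℝ^n`. -/
noncomputable def l2OpNorm {n : ℕ} (M : Matrix (Fin n) (Fin n) ℝ) : ℝ :=
  ‖Matrix.toEuclideanCLM (𝕜 := ℝ) M‖

theorem Real.exp_sub_one_le_mul_exp (x : ℝ) : Real.exp x - 1 ≤ x * Real.exp x := by
  have h := mul_le_mul_of_nonneg_left (Real.one_sub_le_exp_neg x) (Real.exp_pos x).le
  rw [← Real.exp_add, add_neg_cancel, Real.exp_zero] at h
  linarith

section ExpPerturbation

open NormedSpace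

variable {𝔸 : Type*} [NormedRing 𝔸]

theorem norm_add_pow_sub_pow_le (X E : 𝔸) (k : ℕ) :
    ‖(X + E) ^ k - X ^ k‖ ≤ (‖X‖ + ‖E‖) ^ k - ‖X‖ ^ k := by
  rcases Nat.eq_zero_or_pos k with rfl | hk
  · simp
  -- The induction starts at `k = 1` since `‖1‖ ≤ 1` may fail (e.g. for the Frobenius norm).
  induction k, hk using Nat.le_induction with
  | base => simp
  | succ k hk ih =>
    have hXk : ‖X ^ k‖ ≤ ‖X‖ ^ k := norm_pow_le' X hk
    calc ‖(X + E) ^ (k + 1) - X ^ (k + 1)‖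
        = ‖(X + E) * ((X + E) ^ k - X ^ k) + E * X ^ k‖ := by
          rw [pow_succ', pow_succ']; congr 1; noncomm_ring
      _ ≤ (‖X‖ + ‖E‖) * ((‖X‖ + ‖E‖) ^ k - ‖X‖ ^ k) + ‖E‖ * ‖X‖ ^ k := by
        refine (norm_add_le _ _).trans (add_le_add ?_ ?_)
        · exact (norm_mul_le _ _).trans
            (mul_le_mul (norm_add_le X E) ih (norm_nonneg _) (by positivity))
        · exact (norm_mul_le _ _).trans (mul_le_mul_of_nonneg_left hXk (norm_nonneg E))
      _ = (‖X‖ + ‖E‖) ^ (k + 1) - ‖X‖ ^ (k + 1) := by ring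

variable [NormedAlgebra ℝ 𝔸] [CompleteSpace 𝔸]

open Nat in
theorem norm_exp_add_sub_exp_le_exp_sub_exp (X E : 𝔸) :
    ‖exp (X + E) - exp X‖ ≤ Real.exp (‖X‖ + ‖E‖) - Real.exp ‖X‖ := by
  have hdiff : HasSum (fun k => (k !⁻¹ : ℝ) • ((X + E) ^ k - X ^ k)) (exp (X + E) - exp X) := by
    simpa only [smul_sub] using
      (exp_series_hasSum_exp' (𝕂 := ℝ) (X + E)).sub (exp_series_hasSum_exp' (𝕂 := ℝ) X)
  have hreal : HasSum (fun k => ((‖X‖ + ‖E‖) ^ k - ‖X‖ ^ k) / k !)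
      (Real.exp (‖X‖ + ‖E‖) - Real.exp ‖X‖) := by
    simpa only [sub_div, Real.exp_eq_exp_ℝ] using
      (expSeries_div_hasSum_exp (‖X‖ + ‖E‖)).sub (expSeries_div_hasSum_exp ‖X‖)
  refine hdiff.norm_le_of_bounded hreal fun k => ?_
  rw [norm_smul, div_eq_inv_mul, norm_inv, Real.norm_natCast]
  exact mul_le_mul_of_nonneg_left (norm_add_pow_sub_pow_le X E k) (by positivity)

theorem norm_exp_add_sub_exp_le (X E : 𝔸) :
    ‖exp (X + E) - exp X‖ ≤ ‖E‖ * Real.exp ‖E‖ * Real.exp ‖X‖ :=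
  calc ‖exp (X + E) - exp X‖ ≤ Real.exp (‖X‖ + ‖E‖) - Real.exp ‖X‖ :=
        norm_exp_add_sub_exp_le_exp_sub_exp X E
    _ = (Real.exp ‖E‖ - 1) * Real.exp ‖X‖ := by rw [Real.exp_add]; ring
    _ ≤ ‖E‖ * Real.exp ‖E‖ * Real.exp ‖X‖ := by
      gcongr
      exact Real.exp_sub_one_le_mul_exp ‖E‖

end ExpPerturbation

namespace Matrix

variable {ι 𝕜 : Type*} [Fintype ι] [DecidableEq ι] [RCLike 𝕜]

theorem frobenius_norm_sq_eq_sum_norm_sq_toEuclideanCLM_single (M : Matrix ι ι 𝕜) :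
    ‖M‖ ^ 2 = ∑ j, ‖toEuclideanCLM (𝕜 := 𝕜) M (EuclideanSpace.single j 1)‖ ^ 2 := by
  simp only [EuclideanSpace.norm_sq_eq]
  rw [frobenius_norm_def, ← Real.rpow_natCast, ← Real.rpow_mul (by positivity), Finset.sum_comm]
  norm_num [mulVec_single]

theorem frobenius_norm_le_sqrt_card_mul_norm_toEuclideanCLM (M : Matrix ι ι 𝕜) :
    ‖M‖ ≤ √(Fintype.card ι) * ‖toEuclideanCLM (𝕜 := 𝕜) M‖ := by
  have hcol (j : ι) : ‖toEuclideanCLM (𝕜 := 𝕜) M (EuclideanSpace.single j 1)‖ ^ 2 ≤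
      ‖toEuclideanCLM (𝕜 := 𝕜) M‖ ^ 2 := by
    gcongr
    simpa using (toEuclideanCLM (𝕜 := 𝕜) M).le_opNorm (EuclideanSpace.single j 1)
  have hsq : ‖M‖ ^ 2 ≤ Fintype.card ι * ‖toEuclideanCLM (𝕜 := 𝕜) M‖ ^ 2 := by
    rw [frobenius_norm_sq_eq_sum_norm_sq_toEuclideanCLM_single]
    refine (Finset.sum_le_sum fun j _ => hcol j).trans_eq ?_
    rw [Finset.sum_const, Finset.card_univ, nsmul_eq_mul]
  rw [← Real.sqrt_sq (norm_nonneg M), ← Real.sqrt_sq (norm_nonneg (toEuclideanCLM (𝕜 := 𝕜) M)),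
    ← Real.sqrt_mul (by positivity)]
  exact Real.sqrt_le_sqrt hsq

theorem toEuclideanCLM_exp (M : Matrix ι ι 𝕜) :
    toEuclideanCLM (𝕜 := 𝕜) (NormedSpace.exp M) =
      NormedSpace.exp (toEuclideanCLM (𝕜 := 𝕜) M) := by
  let Φ :=
    (toEuclideanCLM (𝕜 := 𝕜) (n := ι)).toAlgEquiv.toLinearEquiv.toContinuousLinearEquiv
  simp_rw [NormedSpace.exp_eq_tsum 𝕜]
  change Φ _ = _
  rw [Φ.map_tsum]
  simp [Φ, map_pow]

theorem frobenius_norm_exp_add_sub_exp_le (X E : Matrix ι ι ℝ) :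
    ‖NormedSpace.exp (X + E) - NormedSpace.exp X‖ ≤ √(Fintype.card ι) *
      (‖toEuclideanCLM (𝕜 := ℝ) E‖ * Real.exp ‖toEuclideanCLM (𝕜 := ℝ) E‖ *
        Real.exp ‖toEuclideanCLM (𝕜 := ℝ) X‖) := by
  refine (frobenius_norm_le_sqrt_card_mul_norm_toEuclideanCLM _).trans ?_
  rw [map_sub, toEuclideanCLM_exp, toEuclideanCLM_exp, map_add]
  gcongr
  exact norm_exp_add_sub_exp_le _ _

end Matrix

theorem mlayer_certified_robustness_general (p n h : ℕ)
    (A : (Fin p → ℝ) →ₗ[ℝ] Matrix (Fin n) (Fin n) ℝ)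
    (δ : ℝ)
    (hA : ∀ z : Fin p → ℝ, l2OpNorm (A z) ≤ δ * ‖z‖)
    (B : Matrix (Fin n) (Fin n) ℝ)
    (S : Matrix (Fin n) (Fin n) ℝ →L[ℝ] EuclideanSpace ℝ (Fin h)) :
    ∀ x z : Fin p → ℝ,
      ‖S (NormedSpace.exp (B + A (x + z))) - S (NormedSpace.exp (B + A x))‖ ≤
        Real.sqrt n * @Norm.norm _ (ContinuousLinearMap.hasOpNorm (σ₁₂ := RingHom.id ℝ)) S * (δ * ‖z‖) * Real.exp (δ * ‖z‖) *
          Real.exp (l2OpNorm (B + A x)) := by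
  intro x z
  have hAz : l2OpNorm (A z) ≤ δ * ‖z‖ := hA z
  have hdiff : ‖NormedSpace.exp (B + A x + A z) - NormedSpace.exp (B + A x)‖ ≤
      √n * (δ * ‖z‖ * Real.exp (δ * ‖z‖) * Real.exp (l2OpNorm (B + A x))) := by
    refine (Matrix.frobenius_norm_exp_add_sub_exp_le _ _).trans ?_
    unfold l2OpNorm at hAz ⊢
    rw [Fintype.card_fin]
    gcongr
    exact (norm_nonneg _).trans hAz
  rw [map_add, ← add_assoc, ← map_sub]
  exact (S.le_opNorm _).trans ((mul_le_mul_of_nonneg_left hdiff (norm_nonneg _)).trans_eq (by ring))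

/-- Certified robustness of the M-layer: if `A` is linear from `ℝ^p` (sup norm) to `n × n`
matrices with `‖A z‖₂ ≤ δ ‖z‖_∞`, `B` is a fixed matrix, and `S` is a linear map from
matrices (Frobenius norm) to Euclidean `ℝ^h`, then for all inputs `x` and perturbations `z`,
`‖S (exp (B + A (x + z))) − S (exp (B + A x))‖₂ ≤
  √n · ‖S‖ · δ · ‖z‖_∞ · exp (δ ‖z‖_∞) · exp ‖B + A x‖₂`.
(The norm `‖z‖` on `Fin p → ℝ` is the sup norm, Mathlib's default Pi norm.) -/
theorem mlayer_certified_robustness (p n h : ℕ)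
    (A : (Fin p → ℝ) →ₗ[ℝ] Matrix (Fin n) (Fin n) ℝ)
    (δ : ℝ) (hδ : 0 ≤ δ)
    (hA : ∀ z : Fin p → ℝ, l2OpNorm (A z) ≤ δ * ‖z‖)
    (B : Matrix (Fin n) (Fin n) ℝ)
    (S : Matrix (Fin n) (Fin n) ℝ →L[ℝ] EuclideanSpace ℝ (Fin h)) :
    ∀ x z : Fin p → ℝ,
      ‖S (NormedSpace.exp (B + A (x + z))) - S (NormedSpace.exp (B + A x))‖ ≤
        Real.sqrt n * @Norm.norm _ (ContinuousLinearMap.hasOpNorm (σ₁₂ := RingHom.id ℝ)) S * (δ * ‖z‖) * Real.exp (δ * ‖z‖) *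
          Real.exp (l2OpNorm (B + A x)) :=
  mlayer_certified_robustness_general p n h A δ hA B S
end

section
/- For every 3×3 real matrix with entries a, b, c (first row), d, e, f (second row), g, h, i (third row), let M be the 8×8 real matrix whose only nonzero entries are: M_{0,2}=i, M_{0,3}=f, M_{1,2}=h, M_{1,3}=e, M_{2,4}=2d, M_{2,5}=−2f, M_{3,4}=−2g, M_{3,5}=2i, M_{4,6}=3c, M_{4,7}=−3b, M_{5,6}=3a. Then exp(M)_{0,7} + exp(M)_{1,6} = aei − afh − bdi + bfg + cdh − ceg, which is exactly the determinant of the given 3×3 matrix. -/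
/-!
The matrix `M = detEncoding a b c d e f g h i` raises the block grading
`{0,1} < {2,3} < {4,5} < {6,7}` of the indices by one step, so `M ^ 4 = 0` and
`exp M = 1 + M + M ^ 2 / 2 + M ^ 3 / 6`. The entries `(0,7)` and `(1,6)` of `1`, `M` and `M ^ 2`
vanish, and the corresponding entries of `M ^ 3 / 6` add up to the cofactor expansion of the
determinant.
-/

open NormedSpace Finset Nat

theorem NormedSpace.exp_eq_sum_range_of_pow_eq_zero (𝕂 : Type*) {𝔸 : Type*} [Field 𝕂] [CharZero 𝕂]
    [Ring 𝔸] [Algebra 𝕂 𝔸] [TopologicalSpace 𝔸] [IsTopologicalRing 𝔸]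
    {x : 𝔸} {n : ℕ} (hx : x ^ n = 0) :
    exp x = ∑ k ∈ range n, (k !⁻¹ : 𝕂) • x ^ k := by
  rw [exp_eq_tsum 𝕂]
  exact tsum_eq_sum fun k hk ↦ by
    rw [pow_eq_zero_of_le (not_lt.mp (mem_range.not.mp hk)) hx, smul_zero]

def detEncoding (a b c d e f g h i : ℝ) : Matrix (Fin 8) (Fin 8) ℝ :=
  !![0, 0, i, f, 0, 0, 0, 0;
     0, 0, h, e, 0, 0, 0, 0;
     0, 0, 0, 0, 2*d, -(2*f), 0, 0;
     0, 0, 0, 0, -(2*g), 2*i, 0, 0;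
     0, 0, 0, 0, 0, 0, 3*c, -(3*b);
     0, 0, 0, 0, 0, 0, 3*a, 0;
     0, 0, 0, 0, 0, 0, 0, 0;
     0, 0, 0, 0, 0, 0, 0, 0]

section

variable (a b c d e f g h i : ℝ)

theorem detEncoding_sq : detEncoding a b c d e f g h i ^ 2 =
    !![0, 0, 0, 0, 2*d*i - 2*f*g, 0, 0, 0;
       0, 0, 0, 0, 2*d*h - 2*e*g, 2*e*i - 2*f*h, 0, 0;
       0, 0, 0, 0, 0, 0, 6*c*d - 6*a*f, -(6*b*d);
       0, 0, 0, 0, 0, 0, 6*a*i - 6*c*g, 6*b*g;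
       0, 0, 0, 0, 0, 0, 0, 0;
       0, 0, 0, 0, 0, 0, 0, 0;
       0, 0, 0, 0, 0, 0, 0, 0;
       0, 0, 0, 0, 0, 0, 0, 0] := by
  ext p q
  fin_cases p <;> fin_cases q <;> simp [sq, detEncoding, Matrix.mul_apply, Fin.sum_univ_succ] <;> ring

theorem detEncoding_pow_three : detEncoding a b c d e f g h i ^ 3 =
    !![0, 0, 0, 0, 0, 0, 6*c*d*i - 6*c*f*g, -(6*b*d*i - 6*b*f*g);
       0, 0, 0, 0, 0, 0, 6*a*e*i - 6*a*f*h + 6*c*d*h - 6*c*e*g, -(6*b*d*h - 6*b*e*g);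
       0, 0, 0, 0, 0, 0, 0, 0;
       0, 0, 0, 0, 0, 0, 0, 0;
       0, 0, 0, 0, 0, 0, 0, 0;
       0, 0, 0, 0, 0, 0, 0, 0;
       0, 0, 0, 0, 0, 0, 0, 0;
       0, 0, 0, 0, 0, 0, 0, 0] := by
  rw [pow_succ, detEncoding_sq]
  ext p q
  fin_cases p <;> fin_cases q <;> simp [detEncoding, Matrix.mul_apply, Fin.sum_univ_succ] <;> ring

theorem detEncoding_pow_four : detEncoding a b c d e f g h i ^ 4 = 0 := by
  rw [pow_succ, detEncoding_pow_three]
  ext p q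
  fin_cases p <;> fin_cases q <;> simp [detEncoding, Matrix.mul_apply, Fin.sum_univ_succ]

end

/-- For the `8 × 8` matrix `M` built from the entries of a `3 × 3` matrix as in the paper,
`exp(M)₀,₇ + exp(M)₁,₆` equals `aei − afh − bdi + bfg + cdh − ceg`, which is exactly the
determinant of the `3 × 3` matrix. -/
theorem exp_eight_by_eight_computes_det (a b c d e f g h i : ℝ) :
    NormedSpace.exp
        (!![0, 0, i, f, 0, 0, 0, 0;
            0, 0, h, e, 0, 0, 0, 0;
            0, 0, 0, 0, 2*d, -(2*f), 0, 0;
            0, 0, 0, 0, -(2*g), 2*i, 0, 0;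
            0, 0, 0, 0, 0, 0, 3*c, -(3*b);
            0, 0, 0, 0, 0, 0, 3*a, 0;
            0, 0, 0, 0, 0, 0, 0, 0;
            0, 0, 0, 0, 0, 0, 0, 0] : Matrix (Fin 8) (Fin 8) ℝ) 0 7 +
      NormedSpace.exp
        (!![0, 0, i, f, 0, 0, 0, 0;
            0, 0, h, e, 0, 0, 0, 0;
            0, 0, 0, 0, 2*d, -(2*f), 0, 0;
            0, 0, 0, 0, -(2*g), 2*i, 0, 0;
            0, 0, 0, 0, 0, 0, 3*c, -(3*b);
            0, 0, 0, 0, 0, 0, 3*a, 0;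
            0, 0, 0, 0, 0, 0, 0, 0;
            0, 0, 0, 0, 0, 0, 0, 0] : Matrix (Fin 8) (Fin 8) ℝ) 1 6 =
      a*e*i - a*f*h - b*d*i + b*f*g + c*d*h - c*e*g ∧
    (!![a, b, c; d, e, f; g, h, i] : Matrix (Fin 3) (Fin 3) ℝ).det =
      a*e*i - a*f*h - b*d*i + b*f*g + c*d*h - c*e*g := by
  refine ⟨?_, by simp [Matrix.det_fin_three]⟩
  change exp (detEncoding a b c d e f g h i) 0 7 + exp (detEncoding a b c d e f g h i) 1 6 = _
  rw [exp_eq_sum_range_of_pow_eq_zero ℝ (detEncoding_pow_four a b c d e f g h i)]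
  simp only [sum_range_succ, sum_range_zero, zero_add, pow_zero, pow_one, Matrix.add_apply,
    Matrix.smul_apply, detEncoding_sq, detEncoding_pow_three]
  simp [detEncoding, factorial]
  ring
end

section
/- Let the entries of a random n×n real matrix X be independent and each uniformly distributed on the interval [−1, 1]. Then the expected value of the square of the determinant of X equals n!/3^n. -/
/-!
Expanding the determinant twice, `det X ^ 2 = ∑ σ τ, sign σ * sign τ * ∏ c, X (σ c) c * X (τ c) c`.
Each term is a monomial in independent entries, so its expectation is a product of moments.
If `σ ≠ τ`, some entry occurs to the first power and the vanishing mean kills the term; each of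
the `n!` diagonal terms contributes `(∫ x², dx/2 on [-1, 1]) ^ n = 3⁻ⁿ`.
-/

open MeasureTheory ProbabilityTheory Finset

namespace Matrix

variable {n : Type*} [DecidableEq n]

/-- The exponent of `X r c` in the monomial `∏ c, X (σ c) c * X (τ c) c`. -/
def permPairExponent (σ τ : Equiv.Perm n) (r c : n) : ℕ :=
  (if σ c = r then 1 else 0) + (if τ c = r then 1 else 0)

lemma permPairExponent_le_two (σ τ : Equiv.Perm n) (r c : n) : permPairExponent σ τ r c ≤ 2 := by
  unfold permPairExponent; split_ifs <;> simp

variable [Fintype n]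

lemma prod_perm_apply_eq_prod_prod_pow {R : Type*} [CommMonoid R] (X : Matrix n n R)
    (σ : Equiv.Perm n) : ∏ c, X (σ c) c = ∏ r, ∏ c, X r c ^ (if σ c = r then 1 else 0) := by
  rw [prod_comm]
  refine prod_congr rfl fun c _ => ?_
  simp [pow_ite, prod_ite_eq]

lemma det_sq_eq_sum_prod_prod_pow {R : Type*} [CommRing R] (X : Matrix n n R) :
    X.det ^ 2 = ∑ σ : Equiv.Perm n, ∑ τ : Equiv.Perm n,
      ((σ.sign : ℤ) * (τ.sign : ℤ) : R) * ∏ r, ∏ c, X r c ^ permPairExponent σ τ r c := by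
  rw [det_apply', sq, sum_mul_sum]
  refine sum_congr rfl fun σ _ => sum_congr rfl fun τ _ => ?_
  simp only [permPairExponent, pow_add, prod_mul_distrib, ← prod_perm_apply_eq_prod_prod_pow]
  ring

variable {M : Type*} [CommMonoidWithZero M] (m : ℕ → M)

lemma prod_prod_permPairExponent_of_ne (hm : m 1 = 0) {σ τ : Equiv.Perm n} (hστ : σ ≠ τ) :
    ∏ r, ∏ c, m (permPairExponent σ τ r c) = 0 := by
  obtain ⟨c, hc⟩ : ∃ c, σ c ≠ τ c := by
    by_contra! h
    exact hστ (Equiv.ext h)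
  refine prod_eq_zero (mem_univ (σ c)) (prod_eq_zero (mem_univ c) ?_)
  simpa [permPairExponent, Ne.symm hc] using hm

lemma prod_prod_permPairExponent_self (hm : m 0 = 1) (σ : Equiv.Perm n) :
    ∏ r, ∏ c, m (permPairExponent σ σ r c) = m 2 ^ Fintype.card n := by
  rw [prod_comm, ← card_univ, ← prod_const]
  refine prod_congr rfl fun c _ => ?_
  have : ∀ r, m (permPairExponent σ σ r c) = if σ c = r then m 2 else 1 := by
    intro r; unfold permPairExponent; split_ifs <;> simp [hm]
  simp [this, prod_ite_eq]

end Matrix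

section Integral

open Matrix

variable {m n : Type*} [Fintype m] [Fintype n] (μ : Measure ℝ) [SigmaFinite μ]

lemma integral_prod_prod_pow_pi_pi (e : m → n → ℕ) :
    ∫ X : Matrix m n ℝ, ∏ r, ∏ c, X r c ^ e r c ∂(Measure.pi fun _ => Measure.pi fun _ => μ) =
      ∏ r, ∏ c, ∫ x, x ^ e r c ∂μ :=
  (integral_fintype_prod_eq_prod (fun r (row : n → ℝ) => ∏ c, row c ^ e r c)).trans <|
    prod_congr rfl fun r _ => integral_fintype_prod_eq_prod fun c x => x ^ e r c

lemma integrable_prod_prod_pow_pi_pi {e : m → n → ℕ}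
    (he : ∀ r c, Integrable (fun x : ℝ => x ^ e r c) μ) :
    Integrable (fun X : Matrix m n ℝ => ∏ r, ∏ c, X r c ^ e r c)
      (Measure.pi fun _ => Measure.pi fun _ => μ) :=
  Integrable.fintype_prod (f := fun r (row : n → ℝ) => ∏ c, row c ^ e r c) fun r =>
    Integrable.fintype_prod fun c => he r c

lemma integral_det_sq_pi_pi_eq_sum [DecidableEq n]
    (hμ : ∀ k ≤ 2, Integrable (fun x : ℝ => x ^ k) μ) :
    ∫ X : Matrix n n ℝ, X.det ^ 2 ∂(Measure.pi fun _ => Measure.pi fun _ => μ) =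
      ∑ σ : Equiv.Perm n, ∑ τ : Equiv.Perm n, ((σ.sign : ℤ) * (τ.sign : ℤ) : ℝ) *
        ∏ r, ∏ c, ∫ x, x ^ permPairExponent σ τ r c ∂μ := by
  have hterm (σ τ : Equiv.Perm n) : Integrable (fun X : Matrix n n ℝ =>
      ((σ.sign : ℤ) * (τ.sign : ℤ) : ℝ) * ∏ r, ∏ c, X r c ^ permPairExponent σ τ r c)
      (Measure.pi fun _ => Measure.pi fun _ => μ) :=
    (integrable_prod_prod_pow_pi_pi μ fun r c =>
      hμ _ (permPairExponent_le_two σ τ r c)).const_mul _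
  simp_rw [det_sq_eq_sum_prod_prod_pow]
  refine (integral_finsetSum _ fun σ _ => integrable_finsetSum _ fun τ _ => hterm σ τ).trans
    (sum_congr rfl fun σ _ => (integral_finsetSum _ fun τ _ => hterm σ τ).trans
      (sum_congr rfl fun τ _ => ?_))
  exact (integral_const_mul _ _).trans (congrArg _ (integral_prod_prod_pow_pi_pi μ _))

end Integral

theorem integral_det_sq_pi_pi {n : Type*} [Fintype n] [DecidableEq n] (μ : Measure ℝ)
    [IsProbabilityMeasure μ] (hμ : MemLp id 2 μ) (hmean : ∫ x, x ∂μ = 0) :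
    ∫ X : Matrix n n ℝ, X.det ^ 2 ∂(Measure.pi fun _ => Measure.pi fun _ => μ) =
      (Fintype.card n).factorial * (∫ x, x ^ 2 ∂μ) ^ Fintype.card n := by
  have hpow : ∀ k ≤ 2, Integrable (fun x : ℝ => x ^ k) μ := by
    intro k hk
    interval_cases k
    · simp
    · simp only [pow_one]
      exact hμ.integrable one_le_two
    · exact hμ.integrable_sq
  rw [integral_det_sq_pi_pi_eq_sum μ hpow]
  set M : ℕ → ℝ := fun k => ∫ x, x ^ k ∂μ
  have hM1 : M 1 = 0 := by simpa [M] using hmean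
  have hM0 : M 0 = 1 := by simp [M]
  calc _ = ∑ σ : Equiv.Perm n, M 2 ^ Fintype.card n := by
        refine sum_congr rfl fun σ _ => ?_
        rw [sum_eq_single σ (fun τ _ hτ => by
            rw [Matrix.prod_prod_permPairExponent_of_ne M hM1 (Ne.symm hτ), mul_zero]) (by simp),
          Matrix.prod_prod_permPairExponent_self M hM0, ← Int.cast_mul, ← Units.val_mul,
          Int.units_mul_self, Units.val_one, Int.cast_one, one_mul]
    _ = _ := by simp [M, Fintype.card_perm]

section UniformIcc

open Set

variable {a b : ℝ}

lemma isProbabilityMeasure_cond_Icc (hab : a < b) : IsProbabilityMeasure (volume[|Icc a b]) :=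
  cond_isProbabilityMeasure_of_finite (by simpa [Real.volume_Icc] using hab)
    (by simp [Real.volume_Icc])

lemma integrable_pow_cond_Icc (hab : a < b) (k : ℕ) :
    Integrable (fun x : ℝ => x ^ k) (volume[|Icc a b]) :=
  (IntegrableOn.integrable (s := Icc a b) (continuous_pow k).integrableOn_Icc).smul_measure
    (by simpa [Real.volume_Icc] using hab)

lemma integral_pow_cond_Icc (hab : a < b) (k : ℕ) :
    ∫ x, x ^ k ∂(volume[|Icc a b]) = (b ^ (k + 1) - a ^ (k + 1)) / ((k + 1) * (b - a)) := by
  rw [ProbabilityTheory.cond, integral_smul_measure, integral_Icc_eq_integral_Ioc,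
    ← intervalIntegral.integral_of_le hab.le, integral_pow, Real.volume_Icc,
    ENNReal.toReal_inv, ENNReal.toReal_ofReal (sub_nonneg.2 hab.le), smul_eq_mul]
  have : b - a ≠ 0 := sub_ne_zero.2 hab.ne'
  field_simp

end UniformIcc

/-- If the entries of a random `n × n` real matrix are i.i.d. uniform on `[-1, 1]`
(the measure `2⁻¹ • volume.restrict (Icc (-1) 1)` in each coordinate), then the expected
value of the square of its determinant is `n! / 3^n`. -/
theorem expected_sq_det_uniform (n : ℕ) :
    ∫ X : Matrix (Fin n) (Fin n) ℝ, (X.det) ^ 2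
        ∂(Measure.pi fun _ : Fin n => Measure.pi fun _ : Fin n =>
            (2⁻¹ : ENNReal) • volume.restrict (Set.Icc (-1 : ℝ) 1)) =
      (Nat.factorial n : ℝ) / 3 ^ n := by
  have hν : (2⁻¹ : ENNReal) • volume.restrict (Set.Icc (-1 : ℝ) 1) = volume[|Set.Icc (-1) 1] := by
    norm_num [ProbabilityTheory.cond, Real.volume_Icc]
  have hab : (-1 : ℝ) < 1 := by norm_num
  have := isProbabilityMeasure_cond_Icc hab
  have hmean : ∫ x, x ∂(volume[|Set.Icc (-1 : ℝ) 1]) = 0 := by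
    simpa using integral_pow_cond_Icc hab 1
  rw [hν, integral_det_sq_pi_pi _
    ((memLp_two_iff_integrable_sq aestronglyMeasurable_id).2 (integrable_pow_cond_Icc hab 2))
    hmean, integral_pow_cond_Icc hab 2]
  norm_num [div_eq_mul_inv, one_div_pow]
end
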